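/- arXiv:math/0304482 — 2 statements merged into one kernel-verified Lean document; each statement's English description precedes it below -/
import Mathlib

section
/- For any decreasing function s : (0,∞) → (0,∞) with lim_{t→0⁺} s(t) = +∞, there exists a positive superharmonic function φ on the upper half-plane U₊ such that φ(x+iy) ≤ s(y) for all x+iy ∈ U₊ with y sufficiently small, but there exists no harmonic function h on U₊ with h(z) ≥ φ(z) for all z ∈ U₊. -/
open MeasureTheory Filter Set

noncomputable section

/-- The upper half-plane. -/
def upperHalf : Set ℂ := {z : ℂ | 0 < z.im}

/-- A function is harmonic on `D` if it is continuous there and satisfies the mean value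
equality over every circle whose closed disk is contained in `D`. -/
def HarmonicOnD (h : ℂ → ℝ) (D : Set ℂ) : Prop :=
  ContinuousOn h D ∧
  ∀ z ∈ D, ∀ r : ℝ, 0 < r → Metric.closedBall z r ⊆ D →
    h z = (2 * Real.pi)⁻¹ * ∫ θ in (0:ℝ)..(2 * Real.pi), h (z + r * Complex.exp (θ * Complex.I))

/-- A function is superharmonic on `D` if it is lower semicontinuous there and satisfies the
super-mean-value inequality over every circle whose closed disk is contained in `D`. -/
def SuperharmonicOnD (u : ℂ → ℝ) (D : Set ℂ) : Prop :=
  LowerSemicontinuousOn u D ∧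
  ∀ z ∈ D, ∀ r : ℝ, 0 < r → Metric.closedBall z r ⊆ D →
    (2 * Real.pi)⁻¹ * (∫ θ in (0:ℝ)..(2 * Real.pi), u (z + r * Complex.exp (θ * Complex.I))) ≤ u z

namespace Complex

def abs : AbsoluteValue ℂ ℝ := NormedField.toAbsoluteValue ℂ

@[simp] lemma abs_apply' (z : ℂ) : Complex.abs z = ‖z‖ := rfl

lemma abs_re_le_abs (z : ℂ) : |z.re| ≤ Complex.abs z := abs_re_le_norm z

lemma abs_im_le_abs (z : ℂ) : |z.im| ≤ Complex.abs z := abs_im_le_norm z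

lemma abs_exp (z : ℂ) : Complex.abs (Complex.exp z) = Real.exp z.re := norm_exp z

lemma sq_abs (z : ℂ) : Complex.abs z ^ 2 = Complex.normSq z := Complex.sq_norm z

lemma abs_ofReal (r : ℝ) : Complex.abs (r : ℂ) = |r| := by simp

lemma abs_conj (z : ℂ) : Complex.abs ((starRingEnd ℂ) z) = Complex.abs z := by simp

lemma abs_I : Complex.abs Complex.I = 1 := by simp

lemma continuous_abs : Continuous Complex.abs := by
  show Continuous fun z : ℂ => ‖z‖
  exact continuous_norm

end Complex

namespace St6

open Metric Topology

/-! ### Mean value property for holomorphic functions -/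

lemma meanvalue {g : ℂ → ℂ} {c : ℂ} {R R' : ℝ} (hR : 0 < R) (hRR' : R < R')
    (hg : DifferentiableOn ℂ g (Metric.ball c R')) :
    ∫ θ in (0:ℝ)..(2*Real.pi), g (c + R * Complex.exp (θ * Complex.I)) =
      (2*Real.pi : ℝ) • g c := by
  have h1 : DiffContOnCl ℂ g (ball c R) :=
    ⟨hg.mono (ball_subset_ball hRR'.le),
     hg.continuousOn.mono (by
        rw [closure_ball c hR.ne']
        exact closedBall_subset_ball hRR')⟩
  have key := h1.circleIntegral_sub_inv_smul (mem_ball_self hR)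
  rw [circleIntegral] at key
  have hne : ∀ θ : ℝ, circleMap 0 R θ ≠ 0 := by
    intro θ
    simp only [circleMap, zero_add]
    exact mul_ne_zero (by exact_mod_cast hR.ne') (Complex.exp_ne_zero _)
  have h2 : ∀ θ : ℝ, deriv (circleMap c R) θ • ((circleMap c R θ - c)⁻¹ • g (circleMap c R θ))
      = Complex.I * g (circleMap c R θ) := by
    intro θ
    rw [deriv_circleMap, circleMap_sub_center, smul_eq_mul, smul_eq_mul]
    field_simp [hne θ]
  simp only [h2] at key
  rw [intervalIntegral.integral_const_mul] at key
  have key2 : Complex.I * (∫ θ in (0:ℝ)..(2*Real.pi), g (circleMap c R θ)) =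
      Complex.I * ((2*Real.pi : ℝ) • g c) := by
    rw [key, smul_eq_mul, Complex.real_smul]; push_cast; ring
  have := mul_left_cancel₀ Complex.I_ne_zero key2
  simpa only [circleMap] using this

lemma core {v : ℂ} (hv : Complex.abs v < 1) :
    ∫ θ in (0:ℝ)..(2*Real.pi), Real.log (Complex.abs (1 + v * Complex.exp (θ * Complex.I))) = 0 := by
  have hslit : ∀ z : ℂ, Complex.abs (v * z) < 1 → (1 + v * z) ∈ Complex.slitPlane := by
    intro z hz
    refine Complex.mem_slitPlane_iff.2 (Or.inl ?_)
    have : |(v*z).re| ≤ Complex.abs (v*z) := Complex.abs_re_le_abs _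
    simp only [Complex.add_re, Complex.one_re]
    have := abs_le.1 this
    linarith [this.1]
  rcases eq_or_ne v 0 with rfl | hv0
  · simp
  · set R' : ℝ := (1 + (Complex.abs v)⁻¹)/2 with hR'def
    have hva : 0 < Complex.abs v := Complex.abs.pos hv0
    have hR'1 : 1 < R' := by
      have : 1 < (Complex.abs v)⁻¹ := (one_lt_inv₀ hva).2 hv
      rw [hR'def]; linarith
    have hsmall : ∀ z : ℂ, z ∈ ball (0:ℂ) R' → Complex.abs (v * z) < 1 := by
      intro z hz
      rw [mem_ball, dist_zero_right] at hz
      rw [map_mul]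
      calc Complex.abs v * Complex.abs z < Complex.abs v * R' := by
            exact mul_lt_mul_of_pos_left hz hva
        _ = (Complex.abs v + 1)/2 := by
            rw [hR'def]; field_simp
        _ < 1 := by linarith
    have hdiff : DifferentiableOn ℂ (fun z => Complex.log (1 + v * z)) (ball (0:ℂ) R') := by
      intro z hz
      exact ((Complex.differentiableAt_log (hslit z (hsmall z hz))).comp z
        ((differentiableAt_const (1:ℂ)).add ((differentiableAt_id).const_mul v))).differentiableWithinAt
    have MV := meanvalue (by norm_num : (0:ℝ) < 1) hR'1 hdiff
    norm_num at MV
    set G : ℝ → ℂ := fun θ => Complex.log (1 + v * Complex.exp (θ * Complex.I)) with hG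
    have hcirc : ∀ θ : ℝ, Complex.abs (v * Complex.exp (θ * Complex.I)) < 1 := by
      intro θ
      rw [map_mul, Complex.abs_exp]
      simp [Complex.mul_I_re]
      exact hv
    have hcont : Continuous G := by
      have h1 : Continuous fun θ : ℝ => 1 + v * Complex.exp (θ * Complex.I) := by continuity
      exact h1.clog fun θ => hslit _ (hcirc θ)
    have hInt : IntervalIntegrable G volume 0 (2*Real.pi) := hcont.intervalIntegrable _ _
    have hre := Complex.reCLM.intervalIntegral_comp_comm hInt
    have hzero : (∫ x in (0:ℝ)..(2*Real.pi), Complex.reCLM (G x)) = 0 := by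
      rw [hre, MV]; simp
    calc ∫ θ in (0:ℝ)..(2*Real.pi), Real.log (Complex.abs (1 + v * Complex.exp (θ * Complex.I)))
        = ∫ x in (0:ℝ)..(2*Real.pi), Complex.reCLM (G x) :=
          intervalIntegral.integral_congr (fun θ _ => (Complex.log_re _).symm)
      _ = 0 := hzero

lemma cont_logabs {f : ℝ → ℂ} (hf : Continuous f) (h : ∀ x, f x ≠ 0) :
    Continuous fun x => Real.log (Complex.abs (f x)) :=
  (Complex.continuous_abs.comp hf).log (fun x => by simpa using h x)

lemma abs_exp_I (θ : ℝ) : Complex.abs (Complex.exp (θ * Complex.I)) = 1 := by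
  rw [Complex.abs_exp]
  simp [Complex.mul_I_re]

lemma one_add_ne_zero {v : ℂ} (hv : Complex.abs v < 1) (θ : ℝ) :
    1 + v * Complex.exp (θ * Complex.I) ≠ 0 := by
  intro h
  have h2 : Complex.abs (v * Complex.exp (θ * Complex.I)) < 1 := by
    rw [map_mul, abs_exp_I, mul_one]; exact hv
  rw [show v * Complex.exp (θ * Complex.I) = -1 by linear_combination h] at h2
  simp at h2

/-- Mean value of `log |z - b|` over a circle not enclosing `b`. -/
lemma logabs_circle_outer {c b : ℂ} {R : ℝ} (hR : 0 < R) (hd : R < Complex.abs (c - b)) :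
    ∫ θ in (0:ℝ)..(2*Real.pi),
        Real.log (Complex.abs (c + R * Complex.exp (θ * Complex.I) - b)) =
      2 * Real.pi * Real.log (Complex.abs (c - b)) := by
  set d : ℂ := c - b with hddef
  have hd0 : d ≠ 0 := by
    intro h; rw [h] at hd; simp at hd; linarith
  have habsd : 0 < Complex.abs d := Complex.abs.pos hd0
  set v : ℂ := (R : ℂ) / d with hvdef
  have hvlt : Complex.abs v < 1 := by
    rw [hvdef, map_div₀, Complex.abs_ofReal, abs_of_pos hR, div_lt_one habsd]
    exact hd
  have hpt : ∀ θ : ℝ, c + R * Complex.exp (θ * Complex.I) - b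
      = d * (1 + v * Complex.exp (θ * Complex.I)) := by
    intro θ
    have hdv : d * v = R := by rw [hvdef]; field_simp
    rw [mul_add, mul_one, ← mul_assoc, hdv, hddef]; ring
  have hlog : ∀ θ : ℝ, Real.log (Complex.abs (c + R * Complex.exp (θ * Complex.I) - b))
      = Real.log (Complex.abs d)
        + Real.log (Complex.abs (1 + v * Complex.exp (θ * Complex.I))) := by
    intro θ
    rw [hpt θ, map_mul, Real.log_mul habsd.ne' (by
      simpa using one_add_ne_zero hvlt θ)]
  rw [intervalIntegral.integral_congr (fun θ _ => hlog θ)]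
  have hint : IntervalIntegrable
      (fun θ : ℝ => Real.log (Complex.abs (1 + v * Complex.exp (θ * Complex.I))))
      volume 0 (2*Real.pi) := by
    apply Continuous.intervalIntegrable
    exact cont_logabs (by continuity) (one_add_ne_zero hvlt)
  rw [intervalIntegral.integral_add (intervalIntegrable_const) hint,
    intervalIntegral.integral_const, core hvlt]
  simp [smul_eq_mul]

/-- Mean value of `log |z - b|` over a circle enclosing `b`. -/
lemma logabs_circle_inner {c b : ℂ} {R : ℝ} (hR : 0 < R) (hd : Complex.abs (c - b) < R) :
    ∫ θ in (0:ℝ)..(2*Real.pi),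
        Real.log (Complex.abs (c + R * Complex.exp (θ * Complex.I) - b)) =
      2 * Real.pi * Real.log R := by
  set d : ℂ := c - b with hddef
  set v : ℂ := (starRingEnd ℂ) (d / (R:ℂ)) with hvdef
  have hRne : (R:ℂ) ≠ 0 := by exact_mod_cast hR.ne'
  have hvlt : Complex.abs v < 1 := by
    rw [hvdef, map_div₀, map_div₀]
    simp only [Complex.abs_conj, Complex.abs_ofReal, abs_of_pos hR]
    rw [div_lt_one hR]
    exact hd
  have hpt : ∀ θ : ℝ, c + R * Complex.exp (θ * Complex.I) - b
      = Complex.exp (θ * Complex.I) * (starRingEnd ℂ) ((R:ℂ) * (1 + v * Complex.exp (θ * Complex.I))) := by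
    intro θ
    have h1 : (starRingEnd ℂ) ((R:ℂ) * (1 + v * Complex.exp (θ * Complex.I)))
        = (R:ℂ) * (1 + (d / (R:ℂ)) * Complex.exp (-(θ * Complex.I))) := by
      rw [map_mul, map_add, map_mul, hvdef, Complex.conj_conj]
      rw [← Complex.exp_conj]
      simp [Complex.conj_ofReal]
    rw [h1, Complex.exp_neg]
    simp only [hddef]
    field_simp [Complex.exp_ne_zero]
    ring
  have hlog : ∀ θ : ℝ, Real.log (Complex.abs (c + R * Complex.exp (θ * Complex.I) - b))
      = Real.log R
        + Real.log (Complex.abs (1 + v * Complex.exp (θ * Complex.I))) := by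
    intro θ
    rw [hpt θ]
    simp only [map_mul, Complex.abs_conj, abs_exp_I, one_mul, Complex.abs_ofReal, abs_of_pos hR]
    exact Real.log_mul hR.ne' (by simpa using one_add_ne_zero hvlt θ)
  rw [intervalIntegral.integral_congr (fun θ _ => hlog θ)]
  have hint : IntervalIntegrable
      (fun θ : ℝ => Real.log (Complex.abs (1 + v * Complex.exp (θ * Complex.I))))
      volume 0 (2*Real.pi) := by
    apply Continuous.intervalIntegrable
    exact cont_logabs (by continuity) (one_add_ne_zero hvlt)
  rw [intervalIntegral.integral_add (intervalIntegrable_const) hint,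
    intervalIntegral.integral_const, core hvlt]
  simp [smul_eq_mul]

/-! ### The truncated Green-type bump function -/

def bump (w : ℂ) (ε : ℝ) (z : ℂ) : ℝ :=
  Real.log (Complex.abs (z - (starRingEnd ℂ) w)) -
    Real.log (max (Complex.abs (z - w)) (ε * Complex.abs (z - (starRingEnd ℂ) w)))

section bumpfacts

variable {w z : ℂ} {ε : ℝ}

lemma A_lower (hw : 0 < w.im) (hz : 0 < z.im) :
    z.im + w.im ≤ Complex.abs (z - (starRingEnd ℂ) w) := by
  calc z.im + w.im = (z - (starRingEnd ℂ) w).im := by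
        simp [Complex.sub_im, Complex.conj_im]
    _ ≤ |(z - (starRingEnd ℂ) w).im| := le_abs_self _
    _ ≤ Complex.abs (z - (starRingEnd ℂ) w) := Complex.abs_im_le_abs _

lemma A_pos (hw : 0 < w.im) (hz : 0 < z.im) : 0 < Complex.abs (z - (starRingEnd ℂ) w) :=
  lt_of_lt_of_le (by linarith) (A_lower hw hz)

lemma sq_diff (hw : 0 < w.im) (hz : 0 < z.im) :
    Complex.abs (z - (starRingEnd ℂ) w) ^ 2 - Complex.abs (z - w) ^ 2 = 4 * z.im * w.im := by
  have h1 : Complex.abs (z - w) ^ 2 =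
      (z.re - w.re) * (z.re - w.re) + (z.im - w.im) * (z.im - w.im) := by
    rw [Complex.sq_abs, Complex.normSq_apply]
    simp [Complex.sub_re, Complex.sub_im]
  have h2 : Complex.abs (z - (starRingEnd ℂ) w) ^ 2 =
      (z.re - w.re) * (z.re - w.re) + (z.im + w.im) * (z.im + w.im) := by
    rw [Complex.sq_abs, Complex.normSq_apply]
    simp [Complex.sub_re, Complex.sub_im, Complex.conj_re, Complex.conj_im]
  rw [h1, h2]
  ring

lemma a_lt_A (hw : 0 < w.im) (hz : 0 < z.im) :
    Complex.abs (z - w) < Complex.abs (z - (starRingEnd ℂ) w) := by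
  refine lt_of_pow_lt_pow_left₀ 2 (Complex.abs.nonneg _) ?_
  nlinarith [sq_diff hw hz]

lemma m_pos (hw : 0 < w.im) (hz : 0 < z.im) (hε0 : 0 < ε) :
    0 < max (Complex.abs (z - w)) (ε * Complex.abs (z - (starRingEnd ℂ) w)) :=
  lt_max_of_lt_right (mul_pos hε0 (A_pos hw hz))

lemma m_lt_A (hw : 0 < w.im) (hz : 0 < z.im) (hε1 : ε < 1) :
    max (Complex.abs (z - w)) (ε * Complex.abs (z - (starRingEnd ℂ) w)) <
      Complex.abs (z - (starRingEnd ℂ) w) :=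
  max_lt (a_lt_A hw hz) (by nlinarith [A_pos hw hz])

lemma bump_pos (hw : 0 < w.im) (hz : 0 < z.im) (hε0 : 0 < ε) (hε1 : ε < 1) :
    0 < bump w ε z :=
  sub_pos.2 (Real.log_lt_log (m_pos hw hz hε0) (m_lt_A hw hz hε1))

lemma bump_le (hw : 0 < w.im) (hz : 0 < z.im) (hε0 : 0 < ε) :
    bump w ε z ≤ -Real.log ε := by
  have h1 : Real.log (ε * Complex.abs (z - (starRingEnd ℂ) w)) ≤
      Real.log (max (Complex.abs (z - w)) (ε * Complex.abs (z - (starRingEnd ℂ) w))) :=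
    Real.log_le_log (mul_pos hε0 (A_pos hw hz)) (le_max_right _ _)
  have h2 := Real.log_mul hε0.ne' (A_pos hw hz).ne'
  unfold bump
  rw [h2] at h1
  linarith

lemma bump_at_singularity (hw : 0 < w.im) (hε0 : 0 < ε) : bump w ε w = -Real.log ε := by
  unfold bump
  rw [sub_self, map_zero, max_eq_right (by positivity : (0:ℝ) ≤ ε * Complex.abs (w - (starRingEnd ℂ) w)),
    Real.log_mul hε0.ne' (A_pos hw hw).ne']
  ring

lemma bump_le_G (hw : 0 < w.im) (hz : 0 < z.im) (hzw : z ≠ w) :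
    bump w ε z ≤ Real.log (Complex.abs (z - (starRingEnd ℂ) w)) - Real.log (Complex.abs (z - w)) := by
  have h0 : 0 < Complex.abs (z - w) := Complex.abs.pos (sub_ne_zero.2 hzw)
  have h1 : Real.log (Complex.abs (z - w)) ≤
      Real.log (max (Complex.abs (z - w)) (ε * Complex.abs (z - (starRingEnd ℂ) w))) :=
    Real.log_le_log h0 (le_max_left _ _)
  unfold bump
  linarith

lemma bump_continuousAt (hw : 0 < w.im) (hε0 : 0 < ε) (hz : 0 < z.im) :
    ContinuousAt (bump w ε) z := by
  have hA : ContinuousAt (fun z : ℂ => Complex.abs (z - (starRingEnd ℂ) w)) z :=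
    (Complex.continuous_abs.comp (continuous_id.sub continuous_const)).continuousAt
  have ha : ContinuousAt (fun z : ℂ => Complex.abs (z - w)) z :=
    (Complex.continuous_abs.comp (continuous_id.sub continuous_const)).continuousAt
  exact ((hA.log (A_pos hw hz).ne').sub
    ((ha.max (hA.const_mul ε)).log (m_pos hw hz hε0).ne'))

end bumpfacts

lemma circle_mem_closedBall (a : ℂ) {ρ r : ℝ} (h0 : 0 ≤ ρ) (hρ : ρ ≤ r) (θ : ℝ) :
    a + ρ * Complex.exp (θ * Complex.I) ∈ closedBall a r := by
  rw [mem_closedBall, Complex.dist_eq, ← Complex.abs_apply']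
  have h1 : Complex.abs (a + ρ * Complex.exp (θ * Complex.I) - a) = |ρ| := by
    simp [add_sub_cancel_left, map_mul, Complex.abs_ofReal, Complex.abs_exp, Complex.mul_I_re]
  rw [h1, _root_.abs_of_nonneg h0]
  exact hρ

lemma v_int_ge {w a : ℂ} (hw : 0 < w.im) {ε : ℝ} (hε0 : 0 < ε) {r ρ : ℝ} (hρ0 : 0 < ρ)
    (hρr : ρ ≤ r) (hball : Metric.closedBall a r ⊆ upperHalf)
    (hd : Complex.abs (a - w) ≠ ρ) (haw : a ≠ w) :
    2 * Real.pi * Real.log (Complex.abs (a - w)) ≤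
      ∫ θ in (0:ℝ)..(2*Real.pi),
        Real.log (max (Complex.abs (a + ρ * Complex.exp (θ * Complex.I) - w))
          (ε * Complex.abs (a + ρ * Complex.exp (θ * Complex.I) - (starRingEnd ℂ) w))) := by
  have hmem : ∀ θ : ℝ, (0:ℝ) < (a + ρ * Complex.exp (θ * Complex.I)).im :=
    fun θ => hball (circle_mem_closedBall a hρ0.le hρr θ)
  have haw0 : 0 < Complex.abs (a - w) := Complex.abs.pos (sub_ne_zero.2 haw)
  have hzwne : ∀ θ : ℝ, a + ρ * Complex.exp (θ * Complex.I) - w ≠ 0 := by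
    intro θ h
    apply hd
    have : (a - w) = -(ρ * Complex.exp (θ * Complex.I)) := by linear_combination h
    rw [this]
    simp only [map_neg_eq_map, map_mul, Complex.abs_ofReal]
    rw [Complex.abs_exp]
    simp [Complex.mul_I_re]
    exact hρ0.le
  have hA : ∀ θ : ℝ, a + ρ * Complex.exp (θ * Complex.I) - (starRingEnd ℂ) w ≠ 0 := by
    intro θ h
    have h2 := congrArg Complex.im h
    simp only [Complex.sub_im, Complex.conj_im, Complex.zero_im] at h2
    have := hmem θ
    linarith
  have hcont1 : Continuous fun θ : ℝ =>
      Real.log (Complex.abs (a + ρ * Complex.exp (θ * Complex.I) - w)) :=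
    cont_logabs (by continuity) hzwne
  have hcont2 : Continuous fun θ : ℝ =>
      Real.log (max (Complex.abs (a + ρ * Complex.exp (θ * Complex.I) - w))
        (ε * Complex.abs (a + ρ * Complex.exp (θ * Complex.I) - (starRingEnd ℂ) w))) := by
    apply Continuous.log
    · exact ((Complex.continuous_abs.comp (by continuity)).max
        (continuous_const.mul (Complex.continuous_abs.comp (by continuity))))
    · intro θ
      refine ne_of_gt (lt_max_of_lt_right (mul_pos hε0 ?_))
      exact Complex.abs.pos (hA θ)
  have hle : ∫ θ in (0:ℝ)..(2*Real.pi),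
      Real.log (Complex.abs (a + ρ * Complex.exp (θ * Complex.I) - w)) ≤
    ∫ θ in (0:ℝ)..(2*Real.pi),
      Real.log (max (Complex.abs (a + ρ * Complex.exp (θ * Complex.I) - w))
        (ε * Complex.abs (a + ρ * Complex.exp (θ * Complex.I) - (starRingEnd ℂ) w))) := by
    apply intervalIntegral.integral_mono_on (by positivity)
      (hcont1.intervalIntegrable _ _) (hcont2.intervalIntegrable _ _)
    intro θ _
    exact Real.log_le_log (Complex.abs.pos (hzwne θ)) (le_max_left _ _)
  refine le_trans ?_ hle
  rcases lt_or_gt_of_ne hd with hlt | hgt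
  · rw [logabs_circle_inner hρ0 hlt]
    nlinarith [Real.pi_pos, Real.log_le_log haw0 hlt.le]
  · rw [logabs_circle_outer hρ0 hgt]

lemma conj_ne {w z : ℂ} (hw : 0 < w.im) (hz : 0 < z.im) : z - (starRingEnd ℂ) w ≠ 0 := by
  intro h
  have h2 := congrArg Complex.im h
  simp only [Complex.sub_im, Complex.conj_im, Complex.zero_im] at h2
  linarith

lemma v_circle_cont {w a : ℂ} {ε ρ : ℝ} (hw : 0 < w.im) (hε0 : 0 < ε)
    (hmem : ∀ θ : ℝ, 0 < (a + ρ * Complex.exp (θ * Complex.I)).im) :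
    Continuous fun θ : ℝ =>
      Real.log (max (Complex.abs (a + ρ * Complex.exp (θ * Complex.I) - w))
        (ε * Complex.abs (a + ρ * Complex.exp (θ * Complex.I) - (starRingEnd ℂ) w))) := by
  apply Continuous.log
  · exact ((Complex.continuous_abs.comp (by continuity)).max
      (continuous_const.mul (Complex.continuous_abs.comp (by continuity))))
  · intro θ
    exact ne_of_gt (lt_max_of_lt_right (mul_pos hε0 (Complex.abs.pos (conj_ne hw (hmem θ)))))

lemma u_circle_cont {w a : ℂ} {ρ : ℝ} (hw : 0 < w.im)
    (hmem : ∀ θ : ℝ, 0 < (a + ρ * Complex.exp (θ * Complex.I)).im) :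
    Continuous fun θ : ℝ =>
      Real.log (Complex.abs (a + ρ * Complex.exp (θ * Complex.I) - (starRingEnd ℂ) w)) :=
  cont_logabs (by continuity) (fun θ => conj_ne hw (hmem θ))

lemma bump_circle_cont {w a : ℂ} {ε ρ : ℝ} (hw : 0 < w.im) (hε0 : 0 < ε)
    (hmem : ∀ θ : ℝ, 0 < (a + ρ * Complex.exp (θ * Complex.I)).im) :
    Continuous fun θ : ℝ => bump w ε (a + ρ * Complex.exp (θ * Complex.I)) :=
  (u_circle_cont hw hmem).sub (v_circle_cont hw hε0 hmem)

lemma im_lt_of_closedBall {a : ℂ} {r : ℝ} (hr : 0 < r) (hball : Metric.closedBall a r ⊆ upperHalf) :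
    r < a.im := by
  have hm : a - r * Complex.I ∈ closedBall a r := by
    rw [mem_closedBall, Complex.dist_eq]
    have h : a - r * Complex.I - a = -(r * Complex.I) := by ring
    rw [h]
    simp [abs_of_pos hr]
  have h2 : (0:ℝ) < (a - r * Complex.I).im := hball hm
  have h3 : (a - r * Complex.I).im = a.im - r := by simp
  linarith [h3 ▸ h2]

lemma bump_supermean {w : ℂ} (hw : 0 < w.im) {ε : ℝ} (hε0 : 0 < ε) (hε1 : ε < 1)
    {a : ℂ} {r : ℝ} (hr : 0 < r) (hball : Metric.closedBall a r ⊆ upperHalf) :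
    ∫ θ in (0:ℝ)..(2*Real.pi), bump w ε (a + r * Complex.exp (θ * Complex.I))
      ≤ 2 * Real.pi * bump w ε a := by
  have ha : (0:ℝ) < a.im := hball (mem_closedBall_self hr.le)
  have hmem : ∀ θ : ℝ, 0 < (a + r * Complex.exp (θ * Complex.I)).im :=
    fun θ => hball (circle_mem_closedBall a hr.le le_rfl θ)
  have hra : r < a.im := im_lt_of_closedBall hr hball
  have hAo : r < Complex.abs (a - (starRingEnd ℂ) w) :=
    lt_of_lt_of_le (by linarith) (A_lower hw ha)
  have hIu : ∫ θ in (0:ℝ)..(2*Real.pi),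
      Real.log (Complex.abs (a + r * Complex.exp (θ * Complex.I) - (starRingEnd ℂ) w)) =
      2 * Real.pi * Real.log (Complex.abs (a - (starRingEnd ℂ) w)) :=
    logabs_circle_outer hr hAo
  rcases le_or_gt (Complex.abs (a - w)) (ε * Complex.abs (a - (starRingEnd ℂ) w)) with h1 | h1
  · have hval : bump w ε a = -Real.log ε := by
      unfold bump
      rw [max_eq_right h1, Real.log_mul hε0.ne' (A_pos hw ha).ne']
      ring
    rw [hval]
    calc ∫ θ in (0:ℝ)..(2*Real.pi), bump w ε (a + r * Complex.exp (θ * Complex.I))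
        ≤ ∫ _θ in (0:ℝ)..(2*Real.pi), -Real.log ε :=
          intervalIntegral.integral_mono_on (by positivity)
            ((bump_circle_cont hw hε0 hmem).intervalIntegrable _ _)
            intervalIntegrable_const (fun θ _ => bump_le hw (hmem θ) hε0)
      _ = 2 * Real.pi * (-Real.log ε) := by
          rw [intervalIntegral.integral_const]
          simp [smul_eq_mul]
  · have haw : a ≠ w := by
      intro h
      rw [h, sub_self, map_zero] at h1
      nlinarith [mul_pos hε0 (A_pos hw (h ▸ ha))]
    have hval : bump w ε a = Real.log (Complex.abs (a - (starRingEnd ℂ) w))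
        - Real.log (Complex.abs (a - w)) := by
      unfold bump
      rw [max_eq_left h1.le]
    have hsplit : ∫ θ in (0:ℝ)..(2*Real.pi), bump w ε (a + r * Complex.exp (θ * Complex.I))
        = (∫ θ in (0:ℝ)..(2*Real.pi),
            Real.log (Complex.abs (a + r * Complex.exp (θ * Complex.I) - (starRingEnd ℂ) w)))
          - ∫ θ in (0:ℝ)..(2*Real.pi),
            Real.log (max (Complex.abs (a + r * Complex.exp (θ * Complex.I) - w))
              (ε * Complex.abs (a + r * Complex.exp (θ * Complex.I) - (starRingEnd ℂ) w))) := by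
      rw [← intervalIntegral.integral_sub ((u_circle_cont hw hmem).intervalIntegrable _ _)
        ((v_circle_cont hw hε0 hmem).intervalIntegrable _ _)]
      rfl
    have hv : 2 * Real.pi * Real.log (Complex.abs (a - w)) ≤
        ∫ θ in (0:ℝ)..(2*Real.pi),
          Real.log (max (Complex.abs (a + r * Complex.exp (θ * Complex.I) - w))
            (ε * Complex.abs (a + r * Complex.exp (θ * Complex.I) - (starRingEnd ℂ) w))) := by
      by_cases hdr : Complex.abs (a - w) = r
      · set V : ℂ → ℝ := fun z =>
          Real.log (max (Complex.abs (z - w)) (ε * Complex.abs (z - (starRingEnd ℂ) w))) with hV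
        set ρ : ℕ → ℝ := fun k => r * (1 - ((k:ℝ)+2)⁻¹) with hρ
        have hinvlt : ∀ k : ℕ, ((k:ℝ)+2)⁻¹ < 1 := by
          intro k
          rw [inv_lt_one_iff₀]
          right
          have : (0:ℝ) ≤ (k:ℝ) := Nat.cast_nonneg k
          linarith
        have hinvpos : ∀ k : ℕ, (0:ℝ) < ((k:ℝ)+2)⁻¹ := by
          intro k
          have : (0:ℝ) ≤ (k:ℝ) := Nat.cast_nonneg k
          positivity
        have hρpos : ∀ k, 0 < ρ k := by
          intro k
          rw [hρ]
          have := hinvlt k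
          nlinarith
        have hρlt : ∀ k, ρ k < r := by
          intro k
          rw [hρ]
          have := hinvpos k
          nlinarith
        have hkey : ∀ k, 2 * Real.pi * Real.log (Complex.abs (a - w)) ≤
            ∫ θ in (0:ℝ)..(2*Real.pi), V (a + ρ k * Complex.exp (θ * Complex.I)) := by
          intro k
          exact v_int_ge hw hε0 (hρpos k) (hρlt k).le hball
            (by rw [hdr]; exact (hρlt k).ne') haw
        have hVcont : ∀ z ∈ closedBall a r, ContinuousAt V z := by
          intro z hz
          have hzim : 0 < z.im := hball hz
          have hA : ContinuousAt (fun z : ℂ => Complex.abs (z - (starRingEnd ℂ) w)) z :=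
            (Complex.continuous_abs.comp (continuous_id.sub continuous_const)).continuousAt
          have haa : ContinuousAt (fun z : ℂ => Complex.abs (z - w)) z :=
            (Complex.continuous_abs.comp (continuous_id.sub continuous_const)).continuousAt
          exact (haa.max (hA.const_mul ε)).log
            (ne_of_gt (lt_max_of_lt_right (mul_pos hε0 (Complex.abs.pos (conj_ne hw hzim)))))
        obtain ⟨C, hC⟩ := (isCompact_closedBall a r).exists_bound_of_continuousOn
          (fun z hz => (hVcont z hz).continuousWithinAt)
        have hmemk : ∀ (k : ℕ) (θ : ℝ), a + ρ k * Complex.exp (θ * Complex.I) ∈ closedBall a r :=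
          fun k θ => circle_mem_closedBall a (hρpos k).le (hρlt k).le θ
        have htend : Tendsto (fun k => ∫ θ in (0:ℝ)..(2*Real.pi),
            V (a + ρ k * Complex.exp (θ * Complex.I))) atTop
            (𝓝 (∫ θ in (0:ℝ)..(2*Real.pi), V (a + r * Complex.exp (θ * Complex.I)))) := by
          apply intervalIntegral.tendsto_integral_filter_of_dominated_convergence
            (fun _ => C)
          · filter_upwards with k
            exact Continuous.aestronglyMeasurable (by
              have : ∀ θ : ℝ, 0 < (a + ρ k * Complex.exp (θ * Complex.I)).im :=
                fun θ => hball (hmemk k θ)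
              exact v_circle_cont hw hε0 this)
          · filter_upwards with k
            filter_upwards with θ _
            exact hC _ (hmemk k θ)
          · exact intervalIntegrable_const
          · filter_upwards with θ _
            have hρtend : Tendsto ρ atTop (𝓝 r) := by
              rw [hρ]
              have h0 : Tendsto (fun k : ℕ => ((k:ℝ)+2)⁻¹) atTop (𝓝 0) := by
                apply Tendsto.inv_tendsto_atTop
                exact tendsto_atTop_add_const_right _ 2 tendsto_natCast_atTop_atTop
              have h2 : Tendsto (fun k : ℕ => (1:ℝ) - ((k:ℝ)+2)⁻¹) atTop (𝓝 (1 - 0)) :=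
                tendsto_const_nhds.sub h0
              have h3 := h2.const_mul r
              simpa using h3
            have hz : Tendsto (fun k => a + ρ k * Complex.exp (θ * Complex.I)) atTop
                (𝓝 (a + r * Complex.exp (θ * Complex.I))) := by
              apply Tendsto.const_add
              apply Tendsto.mul_const
              exact (Complex.continuous_ofReal.tendsto r).comp hρtend
            exact ((hVcont _ (circle_mem_closedBall a hr.le le_rfl θ)).tendsto.comp hz)
        exact ge_of_tendsto htend (Filter.Eventually.of_forall hkey)
      · exact v_int_ge hw hε0 hr le_rfl hball hdr haw
    rw [hsplit, hIu, hval]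
    linarith

/-! ### The sequence of bumps accumulating at `I` -/

def W (n : ℕ) : ℂ := (((1 : ℝ) + ((n:ℝ)+1)⁻¹ : ℝ) : ℂ) * Complex.I

def eps (n : ℕ) : ℝ := Real.exp (-(4:ℝ)^n)

lemma inv_n_pos (n : ℕ) : (0:ℝ) < ((n:ℝ)+1)⁻¹ := by
  have : (0:ℝ) ≤ (n:ℝ) := Nat.cast_nonneg n
  positivity

lemma inv_n_le_one (n : ℕ) : ((n:ℝ)+1)⁻¹ ≤ 1 := by
  rw [inv_le_one_iff₀]
  right
  have : (0:ℝ) ≤ (n:ℝ) := Nat.cast_nonneg n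
  linarith

lemma im_ofReal_mul_I (x : ℝ) : ((x:ℂ) * Complex.I).im = x := by simp

lemma W_im (n : ℕ) : (W n).im = 1 + ((n:ℝ)+1)⁻¹ := by
  rw [W]; exact im_ofReal_mul_I _

lemma W_im_pos (n : ℕ) : 0 < (W n).im := by
  rw [W_im]; linarith [inv_n_pos n]

lemma W_im_gt1 (n : ℕ) : 1 < (W n).im := by
  rw [W_im]; linarith [inv_n_pos n]

lemma W_im_le2 (n : ℕ) : (W n).im ≤ 2 := by
  rw [W_im]; linarith [inv_n_le_one n]

lemma eps_pos (n : ℕ) : 0 < eps n := Real.exp_pos _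

lemma eps_lt_one (n : ℕ) : eps n < 1 := by
  rw [eps, Real.exp_lt_one_iff]
  have : (0:ℝ) < 4^n := by positivity
  linarith

lemma neg_log_eps (n : ℕ) : -Real.log (eps n) = 4^n := by
  rw [eps, Real.log_exp]; ring

lemma I_sub_W (n : ℕ) : Complex.abs (Complex.I - W n) = ((n:ℝ)+1)⁻¹ := by
  have h : Complex.I - W n = -((((n:ℝ)+1)⁻¹ : ℝ) * Complex.I) := by
    rw [W]; push_cast; ring
  rw [h]
  simp only [map_neg_eq_map, map_mul, Complex.abs_ofReal, Complex.abs_I, mul_one]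
  exact _root_.abs_of_pos (inv_n_pos n)

lemma I_sub_conj_W (n : ℕ) : Complex.abs (Complex.I - (starRingEnd ℂ) (W n)) ≤ 3 := by
  have h : Complex.I - (starRingEnd ℂ) (W n) = (((2:ℝ) + ((n:ℝ)+1)⁻¹ : ℝ) : ℂ) * Complex.I := by
    rw [W, map_mul, Complex.conj_I, Complex.conj_ofReal]
    push_cast
    ring
  rw [h, map_mul, Complex.abs_ofReal, Complex.abs_I, mul_one,
    _root_.abs_of_pos (by linarith [inv_n_pos n] : (0:ℝ) < 2 + ((n:ℝ)+1)⁻¹)]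
  linarith [inv_n_le_one n]

/-- Uniform pointwise bound needed for summability. -/
lemma bump_bound {z : ℂ} (hz : 0 < z.im) :
    ∃ K : ℝ, ∀ n : ℕ, bump (W n) (eps n) z ≤ K + Real.log ((n:ℝ)+1) := by
  by_cases hzI : z = Complex.I
  · refine ⟨Real.log 3, fun n => ?_⟩
    subst hzI
    have hIim : (0:ℝ) < Complex.I.im := by simp
    have h1 : Complex.I ≠ W n := by
      intro h
      have h2 := congrArg Complex.im h
      rw [W_im] at h2
      simp only [Complex.I_im] at h2
      linarith [inv_n_pos n]
    have h2 := bump_le_G (ε := eps n) (W_im_pos n) hIim h1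
    rw [I_sub_W n, Real.log_inv] at h2
    have h4 := I_sub_conj_W n
    have h3 : 0 < Complex.abs (Complex.I - (starRingEnd ℂ) (W n)) := A_pos (W_im_pos n) hIim
    have h5 : Real.log (Complex.abs (Complex.I - (starRingEnd ℂ) (W n))) ≤ Real.log 3 :=
      Real.log_le_log h3 h4
    linarith
  · set δ := Complex.abs (z - Complex.I) with hδdef
    have hδ0 : 0 < δ := Complex.abs.pos (sub_ne_zero.2 hzI)
    obtain ⟨N, hN⟩ := exists_nat_gt (2/δ)
    refine ⟨max ((4:ℝ)^N) (Real.log (δ + 3) - Real.log (δ/2)), fun n => ?_⟩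
    have hlognn : 0 ≤ Real.log ((n:ℝ)+1) :=
      Real.log_nonneg (by linarith [Nat.cast_nonneg (α := ℝ) n])
    rcases lt_or_ge n N with h | h
    · have hb : bump (W n) (eps n) z ≤ (4:ℝ)^n := by
        rw [← neg_log_eps]
        exact bump_le (W_im_pos n) hz (eps_pos n)
      have h4 : (4:ℝ)^n ≤ 4^N := pow_le_pow_right₀ (by norm_num) h.le
      have h5 := le_max_left ((4:ℝ)^N) (Real.log (δ + 3) - Real.log (δ/2))
      linarith
    · have hinv : ((n:ℝ)+1)⁻¹ ≤ δ/2 := by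
        have h1 : 2/δ < (n:ℝ)+1 := by
          have : (N:ℝ) ≤ (n:ℝ) := Nat.cast_le.2 h
          linarith
        rw [inv_le_comm₀ (by linarith [Nat.cast_nonneg (α := ℝ) n]) (by positivity), inv_div]
        linarith
      have hlow : δ/2 ≤ Complex.abs (z - W n) := by
        have h1 : δ ≤ Complex.abs (z - W n) + Complex.abs (W n - Complex.I) :=
          Complex.abs.sub_le z (W n) Complex.I
        have h2 : Complex.abs (W n - Complex.I) = ((n:ℝ)+1)⁻¹ := by
          rw [← I_sub_W n, Complex.abs.map_sub]
        rw [h2] at h1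
        linarith
      have hzw : z ≠ W n := by
        intro hcon
        rw [hcon, sub_self, map_zero] at hlow
        linarith
      have hup : Complex.abs (z - (starRingEnd ℂ) (W n)) ≤ δ + 3 := by
        have h1 : Complex.abs (z - (starRingEnd ℂ) (W n)) ≤
            Complex.abs (z - Complex.I) + Complex.abs (Complex.I - (starRingEnd ℂ) (W n)) :=
          Complex.abs.sub_le z Complex.I ((starRingEnd ℂ) (W n))
        linarith [I_sub_conj_W n]
      have hbg := bump_le_G (ε := eps n) (W_im_pos n) hz hzw
      have h5 : Real.log (Complex.abs (z - (starRingEnd ℂ) (W n))) ≤ Real.log (δ + 3) :=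
        Real.log_le_log (A_pos (W_im_pos n) hz) hup
      have h6 : Real.log (δ/2) ≤ Real.log (Complex.abs (z - W n)) :=
        Real.log_le_log (by positivity) hlow
      have h7 := le_max_right ((4:ℝ)^N) (Real.log (δ + 3) - Real.log (δ/2))
      linarith

/-- The positive superharmonic function. -/
def phi (z : ℂ) : ℝ := ∑' n, ((1:ℝ)/2)^n * bump (W n) (eps n) z

lemma term_nonneg {z : ℂ} (hz : 0 < z.im) (n : ℕ) :
    0 ≤ ((1:ℝ)/2)^n * bump (W n) (eps n) z :=
  mul_nonneg (by positivity) (bump_pos (W_im_pos n) hz (eps_pos n) (eps_lt_one n)).le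

lemma phi_summable {z : ℂ} (hz : 0 < z.im) :
    Summable fun n => ((1:ℝ)/2)^n * bump (W n) (eps n) z := by
  obtain ⟨K, hK⟩ := bump_bound hz
  have hmaj : Summable fun n : ℕ => ((1:ℝ)/2)^n * (K + Real.log ((n:ℝ)+1)) := by
    have h1 : Summable fun n : ℕ => ((1:ℝ)/2)^n * K := summable_geometric_two.mul_right K
    have h2 : Summable fun n : ℕ => ((1:ℝ)/2)^n * Real.log ((n:ℝ)+1) := by
      have hs : Summable fun n : ℕ => ((n:ℝ)+1) * ((1:ℝ)/2)^n := by
        have ha : Summable fun n : ℕ => (n:ℝ) * ((1:ℝ)/2)^n := by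
          have := summable_pow_mul_geometric_of_norm_lt_one (R := ℝ) 1 (r := (1:ℝ)/2)
            (by rw [Real.norm_eq_abs, abs_of_pos (by norm_num : (0:ℝ) < 1/2)]; norm_num)
          simpa using this
        have := ha.add summable_geometric_two
        convert this using 2 with n
        ring
      apply Summable.of_nonneg_of_le (fun n => ?_) (fun n => ?_) hs
      · have : (0:ℝ) ≤ Real.log ((n:ℝ)+1) :=
          Real.log_nonneg (by linarith [Nat.cast_nonneg (α := ℝ) n])
        positivity
      · have hle : Real.log ((n:ℝ)+1) ≤ (n:ℝ)+1 := by
          have := Real.log_le_sub_one_of_pos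
            (by linarith [Nat.cast_nonneg (α := ℝ) n] : (0:ℝ) < (n:ℝ)+1)
          linarith
        calc ((1:ℝ)/2)^n * Real.log ((n:ℝ)+1) ≤ ((1:ℝ)/2)^n * ((n:ℝ)+1) :=
              mul_le_mul_of_nonneg_left hle (by positivity)
          _ = ((n:ℝ)+1) * ((1:ℝ)/2)^n := by ring
    have := h1.add h2
    convert this using 2 with n
    ring
  apply Summable.of_nonneg_of_le (term_nonneg hz) (fun n => ?_) hmaj
  exact mul_le_mul_of_nonneg_left (hK n) (by positivity)

lemma phi_nonneg {z : ℂ} (hz : 0 < z.im) : 0 ≤ phi z := tsum_nonneg (term_nonneg hz)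

lemma phi_pos {z : ℂ} (hz : 0 < z.im) : 0 < phi z :=
  Summable.tsum_pos (phi_summable hz) (term_nonneg hz) 0
    (by simpa using (bump_pos (W_im_pos 0) hz (eps_pos 0) (eps_lt_one 0)))


/-! ### Lower semicontinuity -/

lemma phi_lsc : LowerSemicontinuousOn phi upperHalf := by
  intro z hz y hy
  have hzim : 0 < z.im := hz
  have htend : Tendsto (fun N => ∑ n ∈ Finset.range N, ((1:ℝ)/2)^n * bump (W n) (eps n) z)
      atTop (𝓝 (phi z)) := (phi_summable hzim).hasSum.tendsto_sum_nat
  obtain ⟨N, hN⟩ := (htend.eventually (eventually_gt_nhds hy)).exists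
  have hScont : ContinuousWithinAt
      (fun x => ∑ n ∈ Finset.range N, ((1:ℝ)/2)^n * bump (W n) (eps n) x) upperHalf z := by
    apply tendsto_finset_sum
    intro i _
    have hc : ContinuousAt (fun x => ((1:ℝ)/2)^i * bump (W i) (eps i) x) z :=
      (bump_continuousAt (W_im_pos i) (eps_pos i) hzim).const_mul _
    exact hc.continuousWithinAt
  filter_upwards [hScont.eventually (eventually_gt_nhds hN), self_mem_nhdsWithin] with x hx hxU
  have hxim : 0 < x.im := hxU
  calc y < ∑ n ∈ Finset.range N, ((1:ℝ)/2)^n * bump (W n) (eps n) x := hx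
    _ ≤ phi x := Summable.sum_le_tsum (Finset.range N) (fun n _ => term_nonneg hxim n)
        (phi_summable hxim)

/-! ### Super-mean-value inequality -/

lemma phi_supermean {z : ℂ} (hz : z ∈ upperHalf) {r : ℝ} (hr : 0 < r)
    (hball : Metric.closedBall z r ⊆ upperHalf) :
    (2 * Real.pi)⁻¹ * (∫ θ in (0:ℝ)..(2 * Real.pi), phi (z + r * Complex.exp (θ * Complex.I)))
      ≤ phi z := by
  have hzim : 0 < z.im := hz
  have h2π : (0:ℝ) < 2 * Real.pi := by positivity
  rw [inv_mul_le_iff₀ h2π]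
  have hmemc : ∀ θ : ℝ, 0 < (z + r * Complex.exp (θ * Complex.I)).im :=
    fun θ => hball (circle_mem_closedBall z hr.le le_rfl θ)
  set g : ℕ → ℝ → ℝ :=
    fun n θ => ((1:ℝ)/2)^n * bump (W n) (eps n) (z + r * Complex.exp (θ * Complex.I)) with hgdef
  have hgc : ∀ n, Continuous (g n) :=
    fun n => continuous_const.mul (bump_circle_cont (W_im_pos n) (eps_pos n) hmemc)
  have hgnn : ∀ n θ, 0 ≤ g n θ := fun n θ => term_nonneg (hmemc θ) n
  have hgsum : ∀ θ : ℝ, Summable fun n => g n θ := fun θ => phi_summable (hmemc θ)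
  have hFeq : ∀ θ : ℝ, phi (z + r * Complex.exp (θ * Complex.I))
      = (∑' n, ENNReal.ofReal (g n θ)).toReal := by
    intro θ
    rw [← ENNReal.ofReal_tsum_of_nonneg (fun n => hgnn n θ) (hgsum θ),
      ENNReal.toReal_ofReal (tsum_nonneg (fun n => hgnn n θ))]
    rfl
  have hmeas : Measurable fun θ : ℝ => phi (z + r * Complex.exp (θ * Complex.I)) := by
    simp only [hFeq]
    exact (Measurable.ennreal_tsum fun n => (hgc n).measurable.ennreal_ofReal).ennreal_toReal
  rw [intervalIntegral.integral_of_le h2π.le]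
  rw [MeasureTheory.integral_eq_lintegral_of_nonneg_ae
    (ae_of_all _ (fun θ => by rw [hFeq θ]; exact ENNReal.toReal_nonneg))
    hmeas.aestronglyMeasurable]
  have hlin : (∫⁻ θ in Set.Ioc (0:ℝ) (2*Real.pi),
      ENNReal.ofReal (phi (z + r * Complex.exp (θ * Complex.I))))
      ≤ ENNReal.ofReal (2 * Real.pi * phi z) := by
    have e1 : ∀ θ : ℝ, ENNReal.ofReal (phi (z + r * Complex.exp (θ * Complex.I)))
        = ∑' n, ENNReal.ofReal (g n θ) := by
      intro θ
      rw [hFeq θ, ENNReal.ofReal_toReal]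
      exact (ENNReal.ofReal_tsum_of_nonneg (fun n => hgnn n θ) (hgsum θ)) ▸
        ENNReal.ofReal_ne_top
    calc (∫⁻ θ in Set.Ioc (0:ℝ) (2*Real.pi),
          ENNReal.ofReal (phi (z + r * Complex.exp (θ * Complex.I))))
        = ∫⁻ θ in Set.Ioc (0:ℝ) (2*Real.pi), ∑' n, ENNReal.ofReal (g n θ) := by
          exact lintegral_congr (fun θ => e1 θ)
      _ = ∑' n, ∫⁻ θ in Set.Ioc (0:ℝ) (2*Real.pi), ENNReal.ofReal (g n θ) :=
          lintegral_tsum (fun n => ((hgc n).measurable.ennreal_ofReal).aemeasurable)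
      _ ≤ ∑' n, ENNReal.ofReal (((1:ℝ)/2)^n * (2 * Real.pi * bump (W n) (eps n) z)) := by
          apply ENNReal.tsum_le_tsum
          intro n
          rw [← MeasureTheory.ofReal_integral_eq_lintegral_ofReal
            ((hgc n).integrableOn_Ioc) (ae_of_all _ (hgnn n))]
          apply ENNReal.ofReal_le_ofReal
          have : (∫ θ in Set.Ioc (0:ℝ) (2*Real.pi), g n θ) = ∫ θ in (0:ℝ)..(2*Real.pi), g n θ :=
            (intervalIntegral.integral_of_le h2π.le).symm
          rw [this, hgdef]
          rw [intervalIntegral.integral_const_mul]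
          exact mul_le_mul_of_nonneg_left
            (bump_supermean (W_im_pos n) (eps_pos n) (eps_lt_one n) hr hball) (by positivity)
      _ = ENNReal.ofReal (∑' n, ((1:ℝ)/2)^n * (2 * Real.pi * bump (W n) (eps n) z)) := by
          rw [ENNReal.ofReal_tsum_of_nonneg]
          · intro n
            exact mul_nonneg (by positivity)
              (mul_nonneg h2π.le (bump_pos (W_im_pos n) hzim (eps_pos n) (eps_lt_one n)).le)
          · have heq : (fun n => ((1:ℝ)/2)^n * (2 * Real.pi * bump (W n) (eps n) z))
                = fun n => (2 * Real.pi) * (((1:ℝ)/2)^n * bump (W n) (eps n) z) := by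
              funext n; ring
            rw [heq]
            exact (phi_summable hzim).mul_left _
      _ = ENNReal.ofReal (2 * Real.pi * phi z) := by
          congr 1
          have heq : (fun n => ((1:ℝ)/2)^n * (2 * Real.pi * bump (W n) (eps n) z))
              = fun n => (2 * Real.pi) * (((1:ℝ)/2)^n * bump (W n) (eps n) z) := by
            funext n; ring
          rw [heq, tsum_mul_left]
          rfl
  calc (∫⁻ θ in Set.Ioc (0:ℝ) (2*Real.pi),
        ENNReal.ofReal (phi (z + r * Complex.exp (θ * Complex.I)))).toReal
      ≤ (ENNReal.ofReal (2 * Real.pi * phi z)).toReal :=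
        ENNReal.toReal_mono ENNReal.ofReal_ne_top hlin
    _ = 2 * Real.pi * phi z := ENNReal.toReal_ofReal (mul_nonneg h2π.le (phi_nonneg hzim))


/-! ### The small-`y` bound -/

lemma im_diff_le_abs (w z : ℂ) : w.im - z.im ≤ Complex.abs (z - w) := by
  calc w.im - z.im ≤ |z.im - w.im| := by
        rw [abs_sub_comm]; exact le_abs_self _
    _ = |(z - w).im| := by rw [Complex.sub_im]
    _ ≤ Complex.abs (z - w) := Complex.abs_im_le_abs _

lemma bump_small {z : ℂ} (hz : 0 < z.im) (hz2 : z.im ≤ 1/2) (n : ℕ) :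
    bump (W n) (eps n) z ≤ 16 * z.im := by
  have hw1 := W_im_gt1 n
  have hw2 := W_im_le2 n
  have hwpos := W_im_pos n
  have ha2 : (1:ℝ)/2 ≤ Complex.abs (z - W n) := by
    have := im_diff_le_abs (W n) z
    linarith
  have ha0 : (0:ℝ) < Complex.abs (z - W n) := by linarith
  have hzw : z ≠ W n := by
    intro hcon
    rw [hcon, sub_self, map_zero] at ha0
    linarith
  have hA0 : 0 < Complex.abs (z - (starRingEnd ℂ) (W n)) := A_pos hwpos hz
  have haA := a_lt_A hwpos hz
  have hsq := sq_diff hwpos hz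
  have h1 := bump_le_G (ε := eps n) hwpos hz hzw
  have h2 : Real.log (Complex.abs (z - (starRingEnd ℂ) (W n)))
      - Real.log (Complex.abs (z - W n))
      = Real.log (Complex.abs (z - (starRingEnd ℂ) (W n)) / Complex.abs (z - W n)) :=
    (Real.log_div hA0.ne' ha0.ne').symm
  have h3 : Real.log (Complex.abs (z - (starRingEnd ℂ) (W n)) / Complex.abs (z - W n))
      ≤ Complex.abs (z - (starRingEnd ℂ) (W n)) / Complex.abs (z - W n) - 1 :=
    Real.log_le_sub_one_of_pos (by positivity)
  have h4 : Complex.abs (z - (starRingEnd ℂ) (W n)) / Complex.abs (z - W n) - 1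
      ≤ 16 * z.im := by
    rw [div_sub_one ha0.ne', div_le_iff₀ ha0]
    nlinarith [hsq, haA, ha2, hz, hw2]
  linarith

lemma phi_small {z : ℂ} (hz : 0 < z.im) (hz2 : z.im ≤ 1/2) : phi z ≤ 32 * z.im := by
  have h1 : phi z ≤ ∑' n : ℕ, ((1:ℝ)/2)^n * (16 * z.im) := by
    apply Summable.tsum_le_tsum (fun n => mul_le_mul_of_nonneg_left (bump_small hz hz2 n) (by positivity))
      (phi_summable hz) (summable_geometric_two.mul_right _)
  rw [tsum_mul_right, tsum_geometric_two] at h1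
  linarith


end St6

open St6

/-- For any decreasing `s : (0,∞) → (0,∞)` with `s(t) → ∞` as `t → 0⁺`, there
is a positive superharmonic `φ` on the upper half-plane with `φ(x+iy) ≤ s(y)` for all small
`y > 0`, yet `φ` has no harmonic majorant. -/
theorem statement6 (s : ℝ → ℝ)
    (hspos : ∀ t, 0 < t → 0 < s t)
    (hsdec : ∀ t₁ t₂, 0 < t₁ → t₁ ≤ t₂ → s t₂ ≤ s t₁)
    (hslim : Tendsto s (nhdsWithin 0 (Set.Ioi 0)) atTop) :
    ∃ φ : ℂ → ℝ, SuperharmonicOnD φ upperHalf ∧ (∀ z ∈ upperHalf, 0 < φ z) ∧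
      (∃ y₀ : ℝ, 0 < y₀ ∧ ∀ z ∈ upperHalf, z.im ≤ y₀ → φ z ≤ s z.im) ∧
      ¬ ∃ h : ℂ → ℝ, HarmonicOnD h upperHalf ∧ ∀ z ∈ upperHalf, φ z ≤ h z := by
  refine ⟨phi, ⟨phi_lsc, fun z hz r hr hball => phi_supermean hz hr hball⟩,
    fun z hz => phi_pos hz, ?_, ?_⟩
  · have h16 := hslim.eventually (eventually_ge_atTop (16:ℝ))
    have hIoo : Set.Ioo (0:ℝ) (1/2) ∈ nhdsWithin (0:ℝ) (Set.Ioi 0) :=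
      Ioo_mem_nhdsGT_of_mem (by constructor <;> norm_num)
    obtain ⟨y₀, hy16, hy₀⟩ := (h16.and (Filter.eventually_of_mem hIoo (fun x hx => hx))).exists
    refine ⟨y₀, hy₀.1, ?_⟩
    intro z hz hzy
    have hzim : 0 < z.im := hz
    have h1 : phi z ≤ 32 * z.im := phi_small hzim (by linarith [hy₀.2])
    have h2 : s y₀ ≤ s z.im := hsdec z.im y₀ hzim hzy
    nlinarith [hy₀.2]
  · rintro ⟨h, ⟨hcont, _⟩, hmaj⟩
    have hWmem : ∀ n, W n ∈ upperHalf := fun n => W_im_pos n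
    have hφW : ∀ n : ℕ, (2:ℝ)^n ≤ phi (W n) := by
      intro n
      have hb : ((1:ℝ)/2)^n * bump (W n) (eps n) (W n) = 2^n := by
        rw [bump_at_singularity (W_im_pos n) (eps_pos n), neg_log_eps, ← mul_pow]
        norm_num
      calc (2:ℝ)^n = ((1:ℝ)/2)^n * bump (W n) (eps n) (W n) := hb.symm
        _ ≤ phi (W n) := Summable.le_tsum (phi_summable (W_im_pos n)) n
            (fun m _ => term_nonneg (W_im_pos n) m)
    have hWtend : Tendsto W atTop (nhds Complex.I) := by
      have h0 : Tendsto (fun n : ℕ => ((n:ℝ)+1)⁻¹) atTop (nhds 0) := by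
        apply Tendsto.inv_tendsto_atTop
        exact tendsto_atTop_add_const_right _ 1 tendsto_natCast_atTop_atTop
      have h1 : Tendsto (fun n : ℕ => ((1:ℝ) + ((n:ℝ)+1)⁻¹)) atTop (nhds 1) := by
        have hc : Tendsto (fun _ : ℕ => (1:ℝ)) atTop (nhds 1) := tendsto_const_nhds
        simpa using hc.add h0
      have h2 : Tendsto (fun n : ℕ => (((1:ℝ) + ((n:ℝ)+1)⁻¹ : ℝ) : ℂ)) atTop
          (nhds ((1:ℝ) : ℂ)) := (Complex.continuous_ofReal.tendsto _).comp h1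
      have h3 := h2.mul_const Complex.I
      have h4 : ((1:ℝ) : ℂ) * Complex.I = Complex.I := by simp
      rw [← h4]
      exact h3
    have hIU : Complex.I ∈ upperHalf := by
      show (0:ℝ) < Complex.I.im
      simp
    have hit : Tendsto (fun n => h (W n)) atTop (nhds (h Complex.I)) := by
      have hcw : ContinuousWithinAt h upperHalf Complex.I := hcont _ hIU
      exact hcw.tendsto.comp
        (tendsto_nhdsWithin_iff.2 ⟨hWtend, Filter.Eventually.of_forall hWmem⟩)
    have hup : Tendsto (fun n => h (W n)) atTop atTop :=
      tendsto_atTop_mono (fun n => (hφW n).trans (hmaj _ (hWmem n)))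
        (tendsto_pow_atTop_atTop_of_one_lt (by norm_num : (1:ℝ) < 2))
    exact not_tendsto_atTop_of_tendsto_nhds hit hup
end
end

section
/- There exists a constant C > 0 such that for every t ∈ [−2,2], ∫₀¹ x²/((x−t)² + x⁴) dx ≤ C. Equivalently, the Poisson kernel of the upper half-plane evaluated along the parabola y = x² satisfies ∫₀¹ P_{x²}(x−t) dx ≤ C/π uniformly in t ∈ [−2,2], where P_y(t) = (1/π)·y/(y²+t²). -/
open MeasureTheory

private lemma ptwise (t x : ℝ) (hx0 : 0 ≤ x) :
    x ^ 2 / ((x - t) ^ 2 + x ^ 4) ≤ 4 + 64 * t ^ 2 / ((x - t) ^ 2 + t ^ 4) := by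
  have h2 : 0 ≤ 64 * t ^ 2 / ((x - t) ^ 2 + t ^ 4) := by positivity
  rcases le_or_gt (x ^ 2) (4 * (x - t) ^ 2) with h | h
  · have hb : x ^ 2 / ((x - t) ^ 2 + x ^ 4) ≤ 4 := by
      rcases eq_or_lt_of_le (show (0:ℝ) ≤ (x - t) ^ 2 + x ^ 4 by positivity) with hD | hD
      · rw [← hD, div_zero]; norm_num
      · rw [div_le_iff₀ hD]
        nlinarith [pow_le_pow_left₀ hx0 (le_refl x) 4, sq_nonneg x, pow_nonneg hx0 4]
    linarith
  · have hx : 0 < x := by nlinarith [sq_nonneg (x - t)]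
    have hxt : x < 2 * t := by nlinarith
    have htx : 2 * t < 3 * x := by nlinarith
    have ht : 0 < t := by linarith
    have hD1 : 0 < (x - t) ^ 2 + x ^ 4 := by positivity
    have hD2 : 0 < (x - t) ^ 2 + t ^ 4 := by positivity
    have hb : x ^ 2 / ((x - t) ^ 2 + x ^ 4) ≤ 64 * t ^ 2 / ((x - t) ^ 2 + t ^ 4) := by
      rw [div_le_div_iff₀ hD1 hD2]
      have h1 : x ^ 2 ≤ 4 * t ^ 2 := by nlinarith
      have h4 : (2 * t) ^ 4 < (3 * x) ^ 4 := by
        apply pow_lt_pow_left₀ htx (by linarith) (by norm_num)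
      nlinarith [mul_nonneg (show (0:ℝ) ≤ 4 * t ^ 2 - x ^ 2 by linarith) (sq_nonneg (x - t)),
        mul_le_mul_of_nonneg_left h4.le (sq_nonneg x),
        mul_pos (mul_pos ht ht) (pow_pos hx 4), sq_nonneg (x * t)]
    linarith

private lemma main_bound (t : ℝ) (ht : t ∈ Set.Icc (-2 : ℝ) 2) :
    (∫ x in (0:ℝ)..1, x ^ 2 / ((x - t) ^ 2 + x ^ 4)) ≤ 300 := by
  rcases eq_or_ne t 0 with rfl | ht0
  · have heq : (∫ x in (0:ℝ)..1, x ^ 2 / ((x - 0) ^ 2 + x ^ 4))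
        = ∫ x in (0:ℝ)..1, 1 / (1 + x ^ 2) := by
      apply intervalIntegral.integral_congr_ae
      filter_upwards with x hx
      have hx0 : 0 < x := by
        rcases Set.mem_uIoc.1 hx with h | h
        · exact h.1
        · linarith [h.1, h.2]
      field_simp
      ring
    rw [heq, integral_one_div_one_add_sq]
    have := Real.arctan_lt_pi_div_two 1
    have := Real.neg_pi_div_two_lt_arctan 0
    have := Real.pi_le_four
    linarith
  · -- t ≠ 0
    have hden1 : ∀ x : ℝ, (x - t) ^ 2 + x ^ 4 ≠ 0 := by
      intro x h
      have h1 : (x - t) ^ 2 = 0 ∧ x ^ 4 = 0 :=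
        (add_eq_zero_iff_of_nonneg (sq_nonneg _) (by positivity)).1 h
      have hx0 : x = 0 := by
        have := pow_eq_zero_iff (n := 4) (by norm_num) |>.1 h1.2
        exact this
      have : x - t = 0 := by
        have := pow_eq_zero_iff (n := 2) (by norm_num) |>.1 h1.1
        exact this
      apply ht0; linarith [this, hx0]
    have hden2 : ∀ x : ℝ, (x - t) ^ 2 + t ^ 4 ≠ 0 := by
      intro x
      have : (0:ℝ) < (x - t) ^ 2 + t ^ 4 := by positivity
      exact this.ne'
    have hf : Continuous fun x : ℝ => x ^ 2 / ((x - t) ^ 2 + x ^ 4) :=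
      Continuous.div (by continuity) (by continuity) hden1
    have hg : Continuous fun x : ℝ => 4 + 64 * t ^ 2 / ((x - t) ^ 2 + t ^ 4) :=
      Continuous.add continuous_const
        (Continuous.div continuous_const (by continuity) hden2)
    have hmono := intervalIntegral.integral_mono_on (μ := volume) (by norm_num : (0:ℝ) ≤ 1)
      (hf.intervalIntegrable 0 1) (hg.intervalIntegrable 0 1)
      (fun x hx => ptwise t x hx.1)
    -- compute the integral of g
    have ht2 : (0:ℝ) < t ^ 2 := by positivity
    set u : ℝ := (t ^ 2)⁻¹ with hu
    have hu0 : 0 < u := by positivity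
    have hderiv : ∀ x ∈ Set.uIcc (0:ℝ) 1,
        HasDerivAt (fun x => u * Real.arctan (u * (x - t)))
          (((x - t) ^ 2 + t ^ 4)⁻¹) x := by
      intro x _
      have h1 : HasDerivAt (fun x : ℝ => u * (x - t)) u x := by
        simpa using ((hasDerivAt_id x).sub_const t).const_mul u
      have h2 := (h1.arctan).const_mul u
      refine h2.congr_deriv ?_
      rw [hu]
      field_simp
      ring
    have hcont : Continuous fun x : ℝ => (((x - t) ^ 2 + t ^ 4)⁻¹) := by
      apply Continuous.inv₀ (by continuity) hden2
    have hval : (∫ x in (0:ℝ)..1, ((x - t) ^ 2 + t ^ 4)⁻¹)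
        = u * Real.arctan (u * (1 - t)) - u * Real.arctan (u * (0 - t)) :=
      intervalIntegral.integral_eq_sub_of_hasDerivAt hderiv (hcont.intervalIntegrable 0 1)
    have hbound : (∫ x in (0:ℝ)..1, ((x - t) ^ 2 + t ^ 4)⁻¹) ≤ u * Real.pi := by
      rw [hval]
      have a1 := Real.arctan_lt_pi_div_two (u * (1 - t))
      have a2 := Real.neg_pi_div_two_lt_arctan (u * (0 - t))
      nlinarith [hu0]
    have hsplit : (∫ x in (0:ℝ)..1, (4 + 64 * t ^ 2 / ((x - t) ^ 2 + t ^ 4)))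
        = 4 + 64 * t ^ 2 * ∫ x in (0:ℝ)..1, ((x - t) ^ 2 + t ^ 4)⁻¹ := by
      have hrw : (∫ x in (0:ℝ)..1, (4 + 64 * t ^ 2 / ((x - t) ^ 2 + t ^ 4)))
          = ∫ x in (0:ℝ)..1, ((4:ℝ) + 64 * t ^ 2 * ((x - t) ^ 2 + t ^ 4)⁻¹) := by
        simp only [div_eq_mul_inv]
      rw [hrw, intervalIntegral.integral_add intervalIntegrable_const
        ((hcont.intervalIntegrable 0 1).const_mul (64 * t ^ 2)),
        intervalIntegral.integral_const_mul, intervalIntegral.integral_const]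
      norm_num
    have hfinal : (∫ x in (0:ℝ)..1, (4 + 64 * t ^ 2 / ((x - t) ^ 2 + t ^ 4))) ≤ 300 := by
      rw [hsplit]
      have : 64 * t ^ 2 * (∫ x in (0:ℝ)..1, ((x - t) ^ 2 + t ^ 4)⁻¹)
          ≤ 64 * t ^ 2 * (u * Real.pi) := by
        apply mul_le_mul_of_nonneg_left hbound (by positivity)
      have hup : 64 * t ^ 2 * (u * Real.pi) = 64 * Real.pi := by
        rw [hu]; field_simp
      have := Real.pi_le_four
      nlinarith
    linarith

/-- There is `C > 0` such that `∫₀¹ x²/((x−t)² + x⁴) dx ≤ C` uniformly for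
`t ∈ [−2,2]`; equivalently, the Poisson kernel `P_y(t) = (1/π) y/(y²+t²)` of the upper
half-plane satisfies `∫₀¹ P_{x²}(x−t) dx ≤ C/π` uniformly in `t ∈ [−2,2]`. -/
theorem statement16 :
    ∃ C : ℝ, 0 < C ∧
      (∀ t ∈ Set.Icc (-2 : ℝ) 2,
        (∫ x in (0:ℝ)..1, x ^ 2 / ((x - t) ^ 2 + x ^ 4)) ≤ C) ∧
      ∀ t ∈ Set.Icc (-2 : ℝ) 2,
        (∫ x in (0:ℝ)..1, (1 / Real.pi) * x ^ 2 / ((x ^ 2) ^ 2 + (x - t) ^ 2)) ≤ C / Real.pi := by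
  refine ⟨300, by norm_num, fun t ht => main_bound t ht, fun t ht => ?_⟩
  have heq : (∫ x in (0:ℝ)..1, (1 / Real.pi) * x ^ 2 / ((x ^ 2) ^ 2 + (x - t) ^ 2))
      = (1 / Real.pi) * ∫ x in (0:ℝ)..1, x ^ 2 / ((x - t) ^ 2 + x ^ 4) := by
    rw [← intervalIntegral.integral_const_mul]
    apply intervalIntegral.integral_congr
    intro x _
    show 1 / Real.pi * x ^ 2 / ((x ^ 2) ^ 2 + (x - t) ^ 2)
        = 1 / Real.pi * (x ^ 2 / ((x - t) ^ 2 + x ^ 4))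
    rw [mul_div_assoc, add_comm, ← pow_mul]
  rw [heq]
  calc 1 / Real.pi * ∫ x in (0:ℝ)..1, x ^ 2 / ((x - t) ^ 2 + x ^ 4)
      ≤ 1 / Real.pi * 300 := mul_le_mul_of_nonneg_left (main_bound t ht) (by positivity)
    _ = 300 / Real.pi := by ring
end
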